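/- Terracini's Lemma: Let X ⊆ P^r be an irreducible projective variety and let z be a general point of the secant variety SX lying on the line through two general points x, y ∈ X. Then the embedded tangent space T_zSX contains both T_xX and T_yX. -/

import Mathlib

/-!
Let `p` vanish on the secant cone and `y ∈ X`; then `p` vanishes on every line `s ↦ s • w + b • y`
with `w ∈ X`. If `a ≠ 0`, the polynomial `w ↦ p (a • w + b • y)` lies in the ideal of `X`, and its
differential at `x` is `a` times the differential of `p` at `z = a • x + b • y`. If `a = 0`,
differentiating along those lines at `s = 0` shows that the differential of `p` at `z = b • y` is a
linear form vanishing on `X`, hence on `T_x X`.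
-/

/-!
Affine-cone framework for projective algebraic geometry.

A projective subvariety `X ⊆ ℙ^r` is encoded by its affine cone, a subset of the
vector space `ι → K` (with `ι = Fin (r+1)`).  Algebraicity is "being a zero locus of
polynomials", irreducibility is primality of the vanishing ideal, and the dimension
`adim` of a set is the Krull dimension of its affine coordinate ring (so the affine
cone over an `m`-dimensional projective variety has `adim = m + 1`).  Embedded
(Zariski) tangent spaces are defined by differentiating all polynomials of the
vanishing ideal; at a smooth point of the cone this is the affine cone over the
embedded projective tangent space.
-/

open MvPolynomial

variable {K : Type} [Field K] {ι : Type} [Fintype ι]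

/-- The vanishing ideal of a subset of affine space `ι → K`. -/
noncomputable def vIdeal (V : Set (ι → K)) : Ideal (MvPolynomial ι K) where
  carrier := {p | ∀ x ∈ V, eval x p = 0}
  add_mem' := by
    intro a b ha hb x hx
    simp [map_add, ha x hx, hb x hx]
  zero_mem' := by intro x hx; simp
  smul_mem' := by
    intro c p hp x hx
    simp [smul_eq_mul, hp x hx]

/-- `V` is a (Zariski-closed) algebraic subset of affine space. -/
def IsAlg (V : Set (ι → K)) : Prop :=
  ∃ S : Set (MvPolynomial ι K), V = {x | ∀ p ∈ S, eval x p = 0}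

/-- Dimension of an algebraic set: the Krull dimension of its coordinate ring. -/
noncomputable def adim (V : Set (ι → K)) : WithBot ℕ∞ :=
  ringKrullDim (MvPolynomial ι K ⧸ vIdeal V)

/-- Irreducibility, via primality of the vanishing ideal. -/
def IsIrred (V : Set (ι → K)) : Prop := (vIdeal V).IsPrime

/-- `V` is an affine cone. -/
def IsCone (V : Set (ι → K)) : Prop := 0 ∈ V ∧ ∀ (c : K), ∀ x ∈ V, c • x ∈ V

/-- Non-degenerate: the linear span of `V` is the whole ambient space. -/
def Nondeg (V : Set (ι → K)) : Prop := Submodule.span K V = ⊤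

/-- Zariski closure: the zero locus of the vanishing ideal. -/
def zcl (S : Set (ι → K)) : Set (ι → K) := {x | ∀ p ∈ vIdeal S, eval x p = 0}

/-- The embedded (Zariski) tangent space of `V` at `x`, as a linear subspace of the
ambient vector space. -/
noncomputable def tangentAt (V : Set (ι → K)) (x : ι → K) : Submodule K (ι → K) where
  carrier := {v | ∀ p ∈ vIdeal V, ∑ i, v i * eval x (pderiv i p) = 0}
  add_mem' := by
    intro a b ha hb p hp
    have h := ha p hp
    have h' := hb p hp
    simp only [Pi.add_apply, add_mul, Finset.sum_add_distrib, h, h', add_zero]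
  zero_mem' := by intro p hp; simp
  smul_mem' := by
    intro c v hv p hp
    have h := hv p hp
    simp only [Pi.smul_apply, smul_eq_mul, mul_assoc, ← Finset.mul_sum, h, mul_zero]

/-- `x` is a smooth point of `V`: the Zariski tangent space has the same dimension
as `V`. -/
def IsSmoothPt (V : Set (ι → K)) (x : ι → K) : Prop :=
  (Module.finrank K (tangentAt V x) : WithBot ℕ∞) = adim V

/-- A cone is smooth as a projective variety if every nonzero point is a smooth
point. -/
def IsSmoothCone (V : Set (ι → K)) : Prop :=
  ∀ x ∈ V, x ≠ 0 → IsSmoothPt V x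

theorem MvPolynomial.derivative_aeval {R σ : Type*} [CommSemiring R] [Fintype σ]
    (f : σ → Polynomial R) (p : MvPolynomial σ R) :
    Polynomial.derivative (aeval f p) =
      ∑ j, aeval f (pderiv j p) * Polynomial.derivative (f j) := by
  classical
  induction p using MvPolynomial.induction_on with
  | C r => simp
  | add p q hp hq => simp [hp, hq, add_mul, Finset.sum_add_distrib]
  | mul_X p j hp =>
    simp only [map_mul, aeval_X, Polynomial.derivative_mul, hp, pderiv_mul, pderiv_X, map_add,
      add_mul, Finset.sum_add_distrib, Finset.sum_mul]
    congr 1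
    · exact Finset.sum_congr rfl fun k _ => by ring
    · rw [Finset.sum_eq_single j (fun k _ hk => by simp [Pi.single_eq_of_ne hk.symm])
        (by simp)]
      simp

noncomputable def dirDeriv (p : MvPolynomial ι K) (x v : ι → K) : K :=
  ∑ i, v i * eval x (pderiv i p)

theorem mem_tangentAt_iff {V : Set (ι → K)} {x v : ι → K} :
    v ∈ tangentAt V x ↔ ∀ p ∈ vIdeal V, dirDeriv p x v = 0 :=
  Iff.rfl

omit [Fintype ι] in
theorem subset_zcl (S : Set (ι → K)) : S ⊆ zcl S :=
  fun z hz _ hp => hp z hz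

theorem dirDeriv_eq_zero_of_vanishes_on_line [Infinite K] {p : MvPolynomial ι K} {c w : ι → K}
    (h : ∀ s : K, eval (s • w + c) p = 0) : dirDeriv p c w = 0 := by
  let f : ι → Polynomial K := fun j => Polynomial.C (c j) + Polynomial.C (w j) * Polynomial.X
  have hf (s : K) : (fun j => (f j).eval s) = s • w + c := by
    ext j
    simp only [f, Polynomial.eval_add, Polynomial.eval_C, Polynomial.eval_mul, Polynomial.eval_X,
      Pi.add_apply, Pi.smul_apply, smul_eq_mul]
    ring
  have heval (q : MvPolynomial ι K) (s : K) : (aeval f q).eval s = eval (s • w + c) q := by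
    rw [← Polynomial.coe_aeval_eq_eval, comp_aeval_apply, ← coe_aeval_eq_eval, ← hf]
    rfl
  have hline : aeval f p = 0 := Polynomial.funext fun s => by rw [heval, h, Polynomial.eval_zero]
  have hder := congrArg (fun q => (Polynomial.derivative q).eval 0) hline
  simp only [derivative_aeval, Polynomial.derivative_zero, Polynomial.eval_zero,
    Polynomial.eval_finsetSum, Polynomial.eval_mul, heval, zero_smul, zero_add] at hder
  rw [← hder]
  refine Finset.sum_congr rfl fun j _ => ?_
  simp only [f, Polynomial.derivative_add, Polynomial.derivative_C, Polynomial.derivative_C_mul_X,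
    zero_add, Polynomial.eval_C]
  ring

theorem sum_mul_eq_zero_of_mem_tangentAt {V : Set (ι → K)} {x v : ι → K} {α : ι → K}
    (hα : ∀ w ∈ V, ∑ j, w j * α j = 0) (hv : v ∈ tangentAt V x) :
    ∑ i, v i * α i = 0 := by
  classical
  have hmem : ∑ j, C (α j) * X j ∈ vIdeal V := fun w hw => by
    simpa [mul_comm] using hα w hw
  have h := (mem_tangentAt_iff.1 hv) _ hmem
  simpa [dirDeriv, pderiv_X, Pi.single_apply] using h

omit [Fintype ι] in
noncomputable def affineSubst (a : K) (c : ι → K) :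
    MvPolynomial ι K →ₐ[K] MvPolynomial ι K :=
  bind₁ fun j => C a * X j + C (c j)

omit [Fintype ι] in
theorem eval_affineSubst (a : K) (c w : ι → K) (p : MvPolynomial ι K) :
    eval w (affineSubst a c p) = eval (a • w + c) p := by
  have hw : (fun j => eval w (C a * X j + C (c j))) = a • w + c := by ext j; simp
  exact (eval₂Hom_bind₁ _ _ _ p).trans (by rw [← hw]; rfl)

omit [Fintype ι] in
theorem pderiv_affineSubst (a : K) (c : ι → K) (p : MvPolynomial ι K) (i : ι) :
    pderiv i (affineSubst a c p) = C a * affineSubst a c (pderiv i p) := by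
  classical
  induction p using MvPolynomial.induction_on with
  | C r => simp [affineSubst]
  | add p q hp hq => simp only [map_add, hp, hq, mul_add]
  | mul_X p j hp =>
    simp only [affineSubst, map_mul, bind₁_X_right, pderiv_mul, map_add, pderiv_X,
      pderiv_C] at hp ⊢
    rw [hp]
    rcases eq_or_ne i j with rfl | hij
    · simp only [Pi.single_eq_same, map_one]; ring
    · simp only [Pi.single_eq_of_ne hij.symm, map_zero]; ring

theorem dirDeriv_affineSubst (a : K) (c x v : ι → K) (p : MvPolynomial ι K) :
    dirDeriv (affineSubst a c p) x v = a * dirDeriv p (a • x + c) v := by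
  simp only [dirDeriv, pderiv_affineSubst, eval_mul, eval_C, eval_affineSubst, Finset.mul_sum]
  exact Finset.sum_congr rfl fun i _ => by ring

theorem tangentAt_le_tangentAt_smul_add [Infinite K] {V S : Set (ι → K)} {c : ι → K}
    (hS : ∀ w ∈ V, ∀ s : K, s • w + c ∈ S) (x : ι → K) (a : K) :
    tangentAt V x ≤ tangentAt S (a • x + c) := by
  intro v hv
  rw [mem_tangentAt_iff] at hv ⊢
  intro p hp
  have hpV : ∀ w ∈ V, ∀ s : K, eval (s • w + c) p = 0 := fun w hw s => hp _ (hS w hw s)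
  rcases eq_or_ne a 0 with rfl | ha
  · rw [zero_smul, zero_add]
    exact sum_mul_eq_zero_of_mem_tangentAt
      (fun w hw => dirDeriv_eq_zero_of_vanishes_on_line (hpV w hw)) hv
  · have hq : affineSubst a c p ∈ vIdeal V := fun w hw => by
      rw [eval_affineSubst]
      exact hpV w hw a
    have h := hv _ hq
    rw [dirDeriv_affineSubst] at h
    exact (mul_eq_zero.1 h).resolve_left ha

theorem terracini_lemma_general (r : ℕ)
    (X : Set (Fin (r + 1) → ℂ))
    (SX : Set (Fin (r + 1) → ℂ))
    (hSX : SX = zcl {z | ∃ x ∈ X, ∃ y ∈ X,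
      z ∈ (Submodule.span ℂ {x, y} : Set (Fin (r + 1) → ℂ))}) :
    ∀ x ∈ X, x ≠ 0 → IsSmoothPt X x →
    ∀ y ∈ X, y ≠ 0 → IsSmoothPt X y →
    ∀ z ∈ (Submodule.span ℂ {x, y} : Set (Fin (r + 1) → ℂ)), z ≠ 0 →
      tangentAt X x ≤ tangentAt SX z ∧ tangentAt X y ≤ tangentAt SX z := by
  intro x hx _ _ y hy _ _ z hz _
  obtain ⟨a, b, rfl⟩ := Submodule.mem_span_pair.1 hz
  have hjoin : ∀ u ∈ X, ∀ w ∈ X, ∀ s t : ℂ, s • w + t • u ∈ SX := fun u hu w hw s t => by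
    rw [hSX]
    exact subset_zcl _ ⟨w, hw, u, hu, Submodule.mem_span_pair.2 ⟨s, t, rfl⟩⟩
  refine ⟨tangentAt_le_tangentAt_smul_add (fun w hw s => hjoin y hy w hw s b) x a, ?_⟩
  rw [add_comm (a • x)]
  exact tangentAt_le_tangentAt_smul_add (fun w hw s => hjoin x hx w hw s a) y b

theorem terracini_lemma (r : ℕ)
    (X : Set (Fin (r + 1) → ℂ))
    (hXalg : IsAlg X) (hXirr : IsIrred X) (hXcone : IsCone X)
    (SX : Set (Fin (r + 1) → ℂ))
    (hSX : SX = zcl {z | ∃ x ∈ X, ∃ y ∈ X,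
      z ∈ (Submodule.span ℂ {x, y} : Set (Fin (r + 1) → ℂ))}) :
    ∀ x ∈ X, x ≠ 0 → IsSmoothPt X x →
    ∀ y ∈ X, y ≠ 0 → IsSmoothPt X y →
    ∀ z ∈ (Submodule.span ℂ {x, y} : Set (Fin (r + 1) → ℂ)), z ≠ 0 →
      tangentAt X x ≤ tangentAt SX z ∧ tangentAt X y ≤ tangentAt SX z :=
  terracini_lemma_general r X SX hSX
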